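/- Let (H,R) be a coquasitriangular bialgebra and let σ(a⊗b) = R⁻¹(a₁⊗b₁) b₂⊗a₂ R(a₃⊗b₃). Then σ∘σ = Id_{H⊗H} if and only if the convolution products satisfy Id_{H⊗H} ∗ (R^op ∗ R) = (R^op ∗ R) ∗ Id_{H⊗H}. In particular, if R is cotriangular (R^op = R⁻¹), then σ is involutive. -/

import Mathlib

open TensorProduct

noncomputable section

variable (k H : Type*) [Field k] [Ring H] [Bialgebra k H]

/-- Multiplication of `H` as a linear map. -/
def mu : H ⊗[k] H →ₗ[k] H := LinearMap.mul' k H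
/-- Comultiplication. -/
def delta : H →ₗ[k] H ⊗[k] H := Coalgebra.comul
/-- Counit. -/
def eps : H →ₗ[k] k := Coalgebra.counit
/-- Flip `a⊗b ↦ b⊗a`. -/
def tau : H ⊗[k] H →ₗ[k] H ⊗[k] H := (TensorProduct.comm k H H).toLinearMap
/-- Associator. -/
def assocMap : (H ⊗[k] H) ⊗[k] H →ₗ[k] H ⊗[k] (H ⊗[k] H) :=
  (TensorProduct.assoc k H H H).toLinearMap
/-- Inverse associator. -/
def assocInv : H ⊗[k] (H ⊗[k] H) →ₗ[k] (H ⊗[k] H) ⊗[k] H :=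
  (TensorProduct.assoc k H H H).symm.toLinearMap
/-- The middle-four interchange `(a⊗b)⊗(c⊗d) ↦ (a⊗c)⊗(b⊗d)`. -/
def ttcMap : (H ⊗[k] H) ⊗[k] (H ⊗[k] H) →ₗ[k] (H ⊗[k] H) ⊗[k] (H ⊗[k] H) :=
  (TensorProduct.tensorTensorTensorComm k H H H H).toLinearMap
/-- `a⊗b ↦ (a₁⊗b₁)⊗(a₂⊗b₂)` (Sweedler notation). -/
def dd : H ⊗[k] H →ₗ[k] (H ⊗[k] H) ⊗[k] (H ⊗[k] H) :=
  ttcMap k H ∘ₗ map (delta k H) (delta k H)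
/-- `a⊗b ↦ ((a₁⊗b₁)⊗(a₂⊗b₂))⊗(a₃⊗b₃)`. -/
def ddd : H ⊗[k] H →ₗ[k] ((H ⊗[k] H) ⊗[k] (H ⊗[k] H)) ⊗[k] (H ⊗[k] H) :=
  map (dd k H) LinearMap.id ∘ₗ dd k H
/-- `a⊗b ↦ ε(a)ε(b)`. -/
def epseps : H ⊗[k] H →ₗ[k] k := LinearMap.mul' k k ∘ₗ map (eps k H) (eps k H)
/-- `σ(a⊗b) = (a₁⇀b₁)⊗(a₂↼b₂)` attached to a pair of "actions". -/
def sig (l r : H ⊗[k] H →ₗ[k] H) : H ⊗[k] H →ₗ[k] H ⊗[k] H :=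
  map l r ∘ₗ dd k H


/-- `σ(a⊗b) = R⁻¹(a₁⊗b₁) b₂⊗a₂ R(a₃⊗b₃)`. -/
def sigR (R Ri : H ⊗[k] H →ₗ[k] k) : H ⊗[k] H →ₗ[k] H ⊗[k] H :=
  (TensorProduct.rid k (H ⊗[k] H)).toLinearMap ∘ₗ
    map ((TensorProduct.lid k (H ⊗[k] H)).toLinearMap ∘ₗ map Ri (tau k H)) R ∘ₗ ddd k H

/-- The quantum Killing form `Q := R^op ∗ R`, a linear form on the coalgebra `H⊗H`. -/
def killing (R : H ⊗[k] H →ₗ[k] k) : H ⊗[k] H →ₗ[k] k :=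
  LinearMap.mul' k k ∘ₗ map (R ∘ₗ tau k H) R ∘ₗ dd k H

/-!
For a linear form `φ` on the coalgebra `C = H ⊗ H` write `φ ⇀ x = x₁ φ(x₂)` and
`x ↼ φ = φ(x₁) x₂`; these are the maps `Id ∗ φ` and `φ ∗ Id` of the statement. They are commuting
left and right actions of the convolution algebra `C^*` on `C`, and
`σ = τ ∘ (R ⇀ ·) ∘ (· ↼ R⁻¹)`. The flip `τ` is a coalgebra automorphism, so moving it past an
action replaces the form by its opposite, and collecting terms gives
`σ ∘ σ = (Q ⇀ ·) ∘ (· ↼ Q⁻¹)` with `Q = R^op ∗ R` and `Q⁻¹ = R⁻¹ ∗ (R⁻¹)^op`. Since `· ↼ Q⁻¹` is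
inverse to `· ↼ Q`, this is the identity iff `Q ⇀ · = · ↼ Q`. If `R^op = R⁻¹`, then `Q = ε` and
both actions are the identity.
-/

open Coalgebra WithConv

section Hit

variable {R C D : Type*} [CommSemiring R] [AddCommMonoid C] [Module R C] [Coalgebra R C]
  [AddCommMonoid D] [Module R D] [Coalgebra R D]

lemma lid_comp_lTensor {M N : Type*} [AddCommMonoid M] [Module R M] [AddCommMonoid N]
    [Module R N] (f : M →ₗ[R] N) :
    (TensorProduct.lid R N).toLinearMap ∘ₗ f.lTensor R =
      f ∘ₗ (TensorProduct.lid R M).toLinearMap := by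
  ext; simp

lemma rid_comp_rTensor {M N : Type*} [AddCommMonoid M] [Module R M] [AddCommMonoid N]
    [Module R N] (f : M →ₗ[R] N) :
    (TensorProduct.rid R N).toLinearMap ∘ₗ f.rTensor R =
      f ∘ₗ (TensorProduct.rid R M).toLinearMap := by
  ext; simp

def leftHit (φ : WithConv (C →ₗ[R] R)) : C →ₗ[R] C :=
  (TensorProduct.rid R C).toLinearMap ∘ₗ φ.ofConv.lTensor C ∘ₗ comul

def rightHit (φ : WithConv (C →ₗ[R] R)) : C →ₗ[R] C :=
  (TensorProduct.lid R C).toLinearMap ∘ₗ φ.ofConv.rTensor C ∘ₗ comul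

lemma leftHit_one : leftHit (1 : WithConv (C →ₗ[R] R)) = LinearMap.id := by
  ext x; simp [leftHit, LinearMap.convOne_def]

lemma rightHit_one : rightHit (1 : WithConv (C →ₗ[R] R)) = LinearMap.id := by
  ext x; simp [rightHit, LinearMap.convOne_def]

lemma comul_comp_leftHit (φ : WithConv (C →ₗ[R] R)) :
    comul ∘ₗ leftHit φ = (leftHit φ).lTensor C ∘ₗ comul := by
  have plumbing : (TensorProduct.rid R (C ⊗[R] C)).toLinearMap ∘ₗ φ.ofConv.lTensor (C ⊗[R] C) ∘ₗ
      (TensorProduct.assoc R C C C).symm.toLinearMap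
      = ((TensorProduct.rid R C).toLinearMap ∘ₗ φ.ofConv.lTensor C).lTensor C := by
    ext; simp
  calc comul ∘ₗ leftHit φ
      = (TensorProduct.rid R (C ⊗[R] C)).toLinearMap ∘ₗ (comul.rTensor R ∘ₗ φ.ofConv.lTensor C)
          ∘ₗ comul := by
        simp only [leftHit, ← LinearMap.comp_assoc, rid_comp_rTensor]
    _ = (TensorProduct.rid R (C ⊗[R] C)).toLinearMap ∘ₗ φ.ofConv.lTensor (C ⊗[R] C) ∘ₗ
          (comul.rTensor C ∘ₗ comul) := by
        rw [LinearMap.rTensor_comp_lTensor, ← LinearMap.lTensor_comp_rTensor]; rfl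
    _ = (leftHit φ).lTensor C ∘ₗ comul := by
        rw [← Coalgebra.coassoc_symm]
        simp only [← LinearMap.comp_assoc, plumbing]
        simp only [leftHit, LinearMap.lTensor_comp, LinearMap.comp_assoc]

lemma comul_comp_rightHit (φ : WithConv (C →ₗ[R] R)) :
    comul ∘ₗ rightHit φ = (rightHit φ).rTensor C ∘ₗ comul := by
  have plumbing : (TensorProduct.lid R (C ⊗[R] C)).toLinearMap ∘ₗ φ.ofConv.rTensor (C ⊗[R] C) ∘ₗ
      (TensorProduct.assoc R C C C).toLinearMap
      = ((TensorProduct.lid R C).toLinearMap ∘ₗ φ.ofConv.rTensor C).rTensor C := by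
    ext; simp [TensorProduct.smul_tmul']
  calc comul ∘ₗ rightHit φ
      = (TensorProduct.lid R (C ⊗[R] C)).toLinearMap ∘ₗ (comul.lTensor R ∘ₗ φ.ofConv.rTensor C)
          ∘ₗ comul := by
        simp only [rightHit, ← LinearMap.comp_assoc, lid_comp_lTensor]
    _ = (TensorProduct.lid R (C ⊗[R] C)).toLinearMap ∘ₗ φ.ofConv.rTensor (C ⊗[R] C) ∘ₗ
          (comul.lTensor C ∘ₗ comul) := by
        rw [LinearMap.lTensor_comp_rTensor, ← LinearMap.rTensor_comp_lTensor]; rfl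
    _ = (rightHit φ).rTensor C ∘ₗ comul := by
        rw [← Coalgebra.coassoc]
        simp only [← LinearMap.comp_assoc, plumbing]
        simp only [rightHit, LinearMap.rTensor_comp, LinearMap.comp_assoc]

lemma ofConv_comp_leftHit (φ ψ : WithConv (C →ₗ[R] R)) :
    φ.ofConv ∘ₗ leftHit ψ = (φ * ψ).ofConv := by
  have plumbing : φ.ofConv ∘ₗ (TensorProduct.rid R C).toLinearMap ∘ₗ ψ.ofConv.lTensor C
      = LinearMap.mul' R R ∘ₗ TensorProduct.map φ.ofConv ψ.ofConv := by
    ext; simp [mul_comm]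
  simp only [leftHit, LinearMap.convMul_def, ← LinearMap.comp_assoc, plumbing]

lemma ofConv_comp_rightHit (φ ψ : WithConv (C →ₗ[R] R)) :
    ψ.ofConv ∘ₗ rightHit φ = (φ * ψ).ofConv := by
  have plumbing : ψ.ofConv ∘ₗ (TensorProduct.lid R C).toLinearMap ∘ₗ φ.ofConv.rTensor C
      = LinearMap.mul' R R ∘ₗ TensorProduct.map φ.ofConv ψ.ofConv := by
    ext; simp
  simp only [rightHit, LinearMap.convMul_def, ← LinearMap.comp_assoc, plumbing]

lemma leftHit_mul (φ ψ : WithConv (C →ₗ[R] R)) :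
    leftHit (φ * ψ) = leftHit φ ∘ₗ leftHit ψ :=
  calc leftHit (φ * ψ)
      = (TensorProduct.rid R C).toLinearMap ∘ₗ (φ.ofConv ∘ₗ leftHit ψ).lTensor C ∘ₗ comul := by
        rw [ofConv_comp_leftHit]; rfl
    _ = (TensorProduct.rid R C).toLinearMap ∘ₗ φ.ofConv.lTensor C ∘ₗ comul ∘ₗ leftHit ψ := by
        rw [comul_comp_leftHit, LinearMap.lTensor_comp, LinearMap.comp_assoc]
    _ = leftHit φ ∘ₗ leftHit ψ := rfl

lemma rightHit_mul (φ ψ : WithConv (C →ₗ[R] R)) :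
    rightHit (φ * ψ) = rightHit ψ ∘ₗ rightHit φ :=
  calc rightHit (φ * ψ)
      = (TensorProduct.lid R C).toLinearMap ∘ₗ (ψ.ofConv ∘ₗ rightHit φ).rTensor C ∘ₗ comul := by
        rw [ofConv_comp_rightHit]; rfl
    _ = (TensorProduct.lid R C).toLinearMap ∘ₗ ψ.ofConv.rTensor C ∘ₗ comul ∘ₗ rightHit φ := by
        rw [comul_comp_rightHit, LinearMap.rTensor_comp, LinearMap.comp_assoc]
    _ = rightHit ψ ∘ₗ rightHit φ := rfl

lemma rightHit_comm_leftHit (φ ψ : WithConv (C →ₗ[R] R)) :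
    rightHit φ ∘ₗ leftHit ψ = leftHit ψ ∘ₗ rightHit φ :=
  calc rightHit φ ∘ₗ leftHit ψ
      = (TensorProduct.lid R C).toLinearMap ∘ₗ φ.ofConv.rTensor C ∘ₗ comul ∘ₗ leftHit ψ := rfl
    _ = (TensorProduct.lid R C).toLinearMap ∘ₗ ((leftHit ψ).lTensor R ∘ₗ φ.ofConv.rTensor C)
          ∘ₗ comul := by
        rw [comul_comp_leftHit, LinearMap.lTensor_comp_rTensor, ← LinearMap.rTensor_comp_lTensor,
          LinearMap.comp_assoc]
    _ = leftHit ψ ∘ₗ rightHit φ := by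
        rw [← LinearMap.comp_assoc, ← LinearMap.comp_assoc, lid_comp_lTensor]; rfl

lemma CoalgHom.comp_leftHit (f : C →ₗc[R] D) (φ : WithConv (D →ₗ[R] R)) :
    (f : C →ₗ[R] D) ∘ₗ leftHit (toConv (φ.ofConv ∘ₗ f)) = leftHit φ ∘ₗ f :=
  calc (f : C →ₗ[R] D) ∘ₗ leftHit (toConv (φ.ofConv ∘ₗ f))
      = (TensorProduct.rid R D).toLinearMap ∘ₗ
          ((f : C →ₗ[R] D).rTensor R ∘ₗ (φ.ofConv ∘ₗ f).lTensor C) ∘ₗ comul := by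
        simp only [← LinearMap.comp_assoc, rid_comp_rTensor]; rfl
    _ = (TensorProduct.rid R D).toLinearMap ∘ₗ φ.ofConv.lTensor D ∘ₗ
          (TensorProduct.map (f : C →ₗ[R] D) f ∘ₗ comul) := by
        rw [LinearMap.rTensor_comp_lTensor, ← LinearMap.lTensor_comp_map]; rfl
    _ = leftHit φ ∘ₗ f := by
        rw [CoalgHomClass.map_comp_comul]; rfl

lemma CoalgHom.comp_rightHit (f : C →ₗc[R] D) (φ : WithConv (D →ₗ[R] R)) :
    (f : C →ₗ[R] D) ∘ₗ rightHit (toConv (φ.ofConv ∘ₗ f)) = rightHit φ ∘ₗ f :=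
  calc (f : C →ₗ[R] D) ∘ₗ rightHit (toConv (φ.ofConv ∘ₗ f))
      = (TensorProduct.lid R D).toLinearMap ∘ₗ
          ((f : C →ₗ[R] D).lTensor R ∘ₗ (φ.ofConv ∘ₗ f).rTensor C) ∘ₗ comul := by
        simp only [← LinearMap.comp_assoc, lid_comp_lTensor]; rfl
    _ = (TensorProduct.lid R D).toLinearMap ∘ₗ φ.ofConv.rTensor D ∘ₗ
          (TensorProduct.map (f : C →ₗ[R] D) f ∘ₗ comul) := by
        rw [LinearMap.lTensor_comp_rTensor, ← LinearMap.rTensor_comp_map]; rfl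
    _ = rightHit φ ∘ₗ f := by
        rw [CoalgHomClass.map_comp_comul]; rfl

lemma CoalgHom.toConv_comp_mul_eq_one (f : C →ₗc[R] D) {φ ψ : WithConv (D →ₗ[R] R)}
    (h : φ * ψ = 1) :
    toConv (φ.ofConv ∘ₗ (f : C →ₗ[R] D)) * toConv (ψ.ofConv ∘ₗ (f : C →ₗ[R] D)) = 1 := by
  ext1
  rw [← CoalgHom.toLinearMap_eq_coe, ← LinearMap.convMul_comp_coalgHom_distrib, h]
  simp [LinearMap.convOne_def]

lemma leftHit_comp_rightHit_eq_id_iff {φ ψ : WithConv (C →ₗ[R] R)} (h : φ * ψ = 1)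
    (h' : ψ * φ = 1) : leftHit φ ∘ₗ rightHit ψ = LinearMap.id ↔ leftHit φ = rightHit φ := by
  have hinv : rightHit ψ ∘ₗ rightHit φ = LinearMap.id := by rw [← rightHit_mul, h, rightHit_one]
  constructor
  · intro hid
    calc leftHit φ = (leftHit φ ∘ₗ rightHit ψ) ∘ₗ rightHit φ := by
          rw [LinearMap.comp_assoc, hinv, LinearMap.comp_id]
      _ = rightHit φ := by rw [hid, LinearMap.id_comp]
  · intro heq
    rw [heq, ← rightHit_mul, h', rightHit_one]

end Hit

lemma sigR_eq (R Ri : H ⊗[k] H →ₗ[k] k) :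
    sigR k H R Ri = tau k H ∘ₗ leftHit (toConv R) ∘ₗ rightHit (toConv Ri) := by
  have plumbing : (TensorProduct.rid k (H ⊗[k] H)).toLinearMap ∘ₗ
        TensorProduct.map ((TensorProduct.lid k (H ⊗[k] H)).toLinearMap ∘ₗ
          TensorProduct.map Ri (tau k H)) R
      = tau k H ∘ₗ (TensorProduct.rid k (H ⊗[k] H)).toLinearMap ∘ₗ R.lTensor (H ⊗[k] H) ∘ₗ
          ((TensorProduct.lid k (H ⊗[k] H)).toLinearMap ∘ₗ Ri.rTensor (H ⊗[k] H)).rTensor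
            (H ⊗[k] H) := by
    ext; simp [tau, TensorProduct.smul_tmul']
  calc sigR k H R Ri
      = ((TensorProduct.rid k (H ⊗[k] H)).toLinearMap ∘ₗ
          TensorProduct.map ((TensorProduct.lid k (H ⊗[k] H)).toLinearMap ∘ₗ
            TensorProduct.map Ri (tau k H)) R) ∘ₗ comul.rTensor (H ⊗[k] H) ∘ₗ comul := rfl
    _ = tau k H ∘ₗ (TensorProduct.rid k (H ⊗[k] H)).toLinearMap ∘ₗ R.lTensor (H ⊗[k] H) ∘ₗ
          ((rightHit (toConv Ri)).rTensor (H ⊗[k] H) ∘ₗ comul) := by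
        rw [plumbing]; simp only [rightHit, LinearMap.rTensor_comp, LinearMap.comp_assoc]
    _ = tau k H ∘ₗ leftHit (toConv R) ∘ₗ rightHit (toConv Ri) := by
        rw [← comul_comp_rightHit]; rfl

def tauCoalgHom : H ⊗[k] H →ₗc[k] H ⊗[k] H :=
  (Bialgebra.TensorProduct.comm k H H : H ⊗[k] H →ₗc[k] H ⊗[k] H)

lemma coe_tauCoalgHom : (tauCoalgHom k H : H ⊗[k] H →ₗ[k] H ⊗[k] H) = tau k H := by
  ext; rfl

lemma tau_comp_tau : tau k H ∘ₗ tau k H = LinearMap.id := by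
  ext; rfl

lemma leftHit_comp_tau (φ : H ⊗[k] H →ₗ[k] k) :
    leftHit (toConv φ) ∘ₗ tau k H = tau k H ∘ₗ leftHit (toConv (φ ∘ₗ tau k H)) := by
  simpa only [coe_tauCoalgHom] using (CoalgHom.comp_leftHit (tauCoalgHom k H) (toConv φ)).symm

lemma rightHit_comp_tau (φ : H ⊗[k] H →ₗ[k] k) :
    rightHit (toConv φ) ∘ₗ tau k H = tau k H ∘ₗ rightHit (toConv (φ ∘ₗ tau k H)) := by
  simpa only [coe_tauCoalgHom] using (CoalgHom.comp_rightHit (tauCoalgHom k H) (toConv φ)).symm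

lemma sigR_comp_sigR (R Ri : H ⊗[k] H →ₗ[k] k) :
    sigR k H R Ri ∘ₗ sigR k H R Ri =
      leftHit (toConv (killing k H R)) ∘ₗ rightHit (toConv Ri * toConv (Ri ∘ₗ tau k H)) :=
  calc sigR k H R Ri ∘ₗ sigR k H R Ri
      = tau k H ∘ₗ leftHit (toConv R) ∘ₗ (rightHit (toConv Ri) ∘ₗ tau k H) ∘ₗ
          leftHit (toConv R) ∘ₗ rightHit (toConv Ri) := by
        simp only [sigR_eq, LinearMap.comp_assoc]
    _ = tau k H ∘ₗ (leftHit (toConv R) ∘ₗ tau k H) ∘ₗ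
          (rightHit (toConv (Ri ∘ₗ tau k H)) ∘ₗ leftHit (toConv R)) ∘ₗ rightHit (toConv Ri) := by
        rw [rightHit_comp_tau]; simp only [LinearMap.comp_assoc]
    _ = (tau k H ∘ₗ tau k H) ∘ₗ (leftHit (toConv (R ∘ₗ tau k H)) ∘ₗ leftHit (toConv R)) ∘ₗ
          (rightHit (toConv (Ri ∘ₗ tau k H)) ∘ₗ rightHit (toConv Ri)) := by
        rw [leftHit_comp_tau, rightHit_comm_leftHit]; simp only [LinearMap.comp_assoc]
    _ = leftHit (toConv (killing k H R)) ∘ₗ rightHit (toConv Ri * toConv (Ri ∘ₗ tau k H)) := by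
        rw [tau_comp_tau, LinearMap.id_comp, ← leftHit_mul, ← rightHit_mul]; rfl

lemma toConv_mul_toConv_eq_one {R Ri : H ⊗[k] H →ₗ[k] k}
    (h : LinearMap.mul' k k ∘ₗ TensorProduct.map R Ri ∘ₗ dd k H = epseps k H) :
    toConv R * toConv Ri = 1 := by
  ext1
  refine h.trans ?_
  ext; simp [epseps, eps, mul_comm]

theorem sigR_involutive_iff_killing_central
    (R Ri : H ⊗[k] H →ₗ[k] k)
    -- `Ri` is the convolution inverse of `R`:
    (hconv1 : LinearMap.mul' k k ∘ₗ map R Ri ∘ₗ dd k H = epseps k H)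
    (hconv2 : LinearMap.mul' k k ∘ₗ map Ri R ∘ₗ dd k H = epseps k H)
    :
    ((sigR k H R Ri ∘ₗ sigR k H R Ri = LinearMap.id) ↔
      ((TensorProduct.rid k (H ⊗[k] H)).toLinearMap ∘ₗ
          map LinearMap.id (killing k H R) ∘ₗ dd k H
        = (TensorProduct.lid k (H ⊗[k] H)).toLinearMap ∘ₗ
            map (killing k H R) LinearMap.id ∘ₗ dd k H)) ∧
    (R ∘ₗ tau k H = Ri → sigR k H R Ri ∘ₗ sigR k H R Ri = LinearMap.id) := by
  have hr := toConv_mul_toConv_eq_one k H hconv1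
  have hri := toConv_mul_toConv_eq_one k H hconv2
  have hr' := (tauCoalgHom k H).toConv_comp_mul_eq_one hr
  have hri' := (tauCoalgHom k H).toConv_comp_mul_eq_one hri
  rw [coe_tauCoalgHom] at hr' hri'
  have hQ : toConv (killing k H R) * (toConv Ri * toConv (Ri ∘ₗ tau k H)) = 1 := by
    change toConv (R ∘ₗ tau k H) * toConv R * _ = 1
    rw [mul_assoc, ← mul_assoc (toConv R), hr, one_mul, hr']
  have hQ' : toConv Ri * toConv (Ri ∘ₗ tau k H) * toConv (killing k H R) = 1 := by
    change _ * (toConv (R ∘ₗ tau k H) * toConv R) = 1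
    rw [mul_assoc, ← mul_assoc (toConv (Ri ∘ₗ tau k H)), hri', one_mul, hri]
  have hiff := sigR_comp_sigR k H R Ri ▸ leftHit_comp_rightHit_eq_id_iff hQ hQ'
  refine ⟨hiff, fun hcot => hiff.mpr ?_⟩
  have hkill : toConv (killing k H R) = 1 := by
    change toConv (R ∘ₗ tau k H) * toConv R = 1
    rw [hcot, hri]
  rw [hkill, rightHit_one, leftHit_one]

end
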